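/- arXiv:2308.00385 — 5 statements merged into one kernel-verified Lean document; each statement's English description precedes it below -/
import Mathlib

section
/- Let α > 0 and let 0 ≤ θ₁ < θ₂ < θ₃ < π be three angles such that θ₂ − θ₁ < π/2, θ₃ − θ₂ < π/2, and π − (θ₃ − θ₁) < π/2 (so that ℂ minus the three lines L_j = e^{iθ_j}·ℝ, j = 1,2,3, consists of six sectors each with acute opening angle at the origin). Then L₁ ∪ L₂ ∪ L₃ is a Liouville set for the Fock space F_α(ℂ). -/
open MeasureTheory Complex

/-- The squared Fock-space norm `‖F‖²_{F_α} = (α/π) ∫_ℂ |F(z)|² e^{-α|z|²} dA(z)`. -/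
noncomputable def fockNormSq (α : ℝ) (F : ℂ → ℂ) : ℝ :=
  (α / Real.pi) * ∫ z : ℂ, ‖F z‖ ^ 2 * Real.exp (-α * ‖z‖ ^ 2)

/-- `F` belongs to the Fock space `F_α(ℂ)`: it is entire and has finite Fock norm. -/
def MemFock (α : ℝ) (F : ℂ → ℂ) : Prop :=
  Differentiable ℂ F ∧
    Integrable fun z : ℂ => ‖F z‖ ^ 2 * Real.exp (-α * ‖z‖ ^ 2)

/-- `Λ` is a Liouville set for `F_α(ℂ)`: every `F ∈ F_α(ℂ)` bounded on `Λ` is constant. -/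
def IsLiouvilleSet (α : ℝ) (Λ : Set ℂ) : Prop :=
  ∀ F : ℂ → ℂ, MemFock α F → (∃ C : ℝ, ∀ z ∈ Λ, ‖F z‖ ≤ C) → ∃ c : ℂ, ∀ z, F z = c

/-! The area mean value inequality for the entire function `F²` turns finiteness of the Fock
norm into the growth bound `‖F z‖ ≤ B e^{α‖z‖²}`. Through `exp`, each of the six acute sectors
cut out by the lines becomes a horizontal strip of width `< π/2` on which this growth is
`exp (B e^{2|Re w|})`, below the Phragmén–Lindelöf threshold `exp (B e^{c|Re w|})`, `c < π/width`.
So the bound of `F` on the lines holds on every sector, `F` is bounded, and Liouville applies. -/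

open Set Metric Filter
open scoped Real
open Real (circleAverage circleAverage_eq_integral_add)

theorem integral_Ioo_circleMap_eq_circleAverage {E : Type*} [NormedAddCommGroup E]
    [NormedSpace ℝ E] (f : ℂ → E) (c : ℂ) (R : ℝ) :
    ∫ θ in Ioo (-π) π, f (circleMap c R θ) = (2 * π) • circleAverage f c R := by
  rw [circleAverage_eq_integral_add (-π), smul_inv_smul₀ Real.two_pi_pos.ne',
    intervalIntegral.integral_comp_add_right (fun θ ↦ f (circleMap c R θ)), zero_add,
    show 2 * π + -π = π by ring, intervalIntegral.integral_of_le (by linarith [Real.pi_pos]),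
    integral_Ioc_eq_integral_Ioo]

theorem add_polarCoord_symm_eq_circleMap (c : ℂ) (p : ℝ × ℝ) :
    c + Complex.polarCoord.symm p = circleMap c p.1 p.2 := by
  simp [Complex.polarCoord_symm_apply, circleMap, Complex.exp_mul_I]

theorem circleMap_mem_closedBall_iff {c : ℂ} {r R θ : ℝ} :
    circleMap c r θ ∈ closedBall c R ↔ |r| ≤ R := by
  rw [mem_closedBall, mem_sphere.1 (circleMap_mem_sphere' c r θ)]

theorem integral_closedBall_eq_integral_circleAverage {E : Type*} [NormedAddCommGroup E]
    [NormedSpace ℝ E] {u : ℂ → E} {c : ℂ} {R : ℝ} (hR : 0 ≤ R)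
    (hu : ContinuousOn u (closedBall c R)) :
    ∫ w in closedBall c R, u w = ∫ r in 0..R, (2 * π * r) • circleAverage u c r := by
  set S : Set (ℝ × ℝ) := Ioc 0 R ×ˢ Ioo (-π) π
  set g : ℝ × ℝ → E := fun p ↦ p.1 • u (circleMap c p.1 p.2)
  have hS : S ⊆ polarCoord.target := fun p hp ↦ ⟨hp.1.1, hp.2⟩
  have hpolar : ∫ w in closedBall c R, u w = ∫ p in S, g p := by
    rw [← integral_indicator measurableSet_closedBall, ← integral_add_left_eq_self _ c,
      ← Complex.integral_comp_polarCoord_symm, ← inter_eq_right.2 hS,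
      ← setIntegral_indicator (measurableSet_Ioc.prod measurableSet_Ioo)]
    refine setIntegral_congr_fun polarCoord.open_target.measurableSet fun p hp ↦ ?_
    have hmem : circleMap c p.1 p.2 ∈ closedBall c R ↔ p ∈ S := by
      have hp₁ : (0 : ℝ) < p.1 := hp.1
      rw [circleMap_mem_closedBall_iff, abs_of_pos hp₁]
      simp [S, hp₁, hp.2]
    rw [add_polarCoord_symm_eq_circleMap]
    by_cases hpS : p ∈ S
    · rw [indicator_of_mem hpS, indicator_of_mem (hmem.2 hpS)]
    · rw [indicator_of_notMem hpS, indicator_of_notMem (mt hmem.1 hpS), smul_zero]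
  have hg : IntegrableOn g S := by
    refine (ContinuousOn.integrableOn_compact (isCompact_Icc.prod isCompact_Icc) ?_).mono_set
      (prod_mono Ioc_subset_Icc_self Ioo_subset_Icc_self)
    refine continuousOn_fst.smul (hu.comp (by fun_prop) fun p hp ↦ ?_)
    rw [circleMap_mem_closedBall_iff, abs_of_nonneg hp.1.1]
    exact hp.1.2
  rw [hpolar, Measure.volume_eq_prod, setIntegral_prod _ hg, intervalIntegral.integral_of_le hR]
  refine setIntegral_congr_fun measurableSet_Ioc fun r _ ↦ ?_
  rw [integral_smul, integral_Ioo_circleMap_eq_circleAverage, smul_smul, mul_comm r]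

theorem norm_le_circleAverage_norm {E : Type*} [NormedAddCommGroup E] [NormedSpace ℂ E]
    [CompleteSpace E] {f : ℂ → E} {c : ℂ} {R : ℝ} (hf : DiffContOnCl ℂ f (ball c |R|)) :
    ‖f c‖ ≤ circleAverage (‖f ·‖) c R := by
  conv_lhs => rw [← hf.circleAverage]
  rw [circleAverage, circleAverage, norm_smul, smul_eq_mul, Real.norm_of_nonneg (by positivity)]
  gcongr
  exact intervalIntegral.norm_integral_le_integral_norm Real.two_pi_pos.le

theorem mul_norm_le_integral_closedBall_norm {E : Type*} [NormedAddCommGroup E]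
    [NormedSpace ℂ E] [CompleteSpace E] {f : ℂ → E} {c : ℂ} {R : ℝ} (hR : 0 ≤ R)
    (hf : DifferentiableOn ℂ f (closedBall c R)) :
    π * R ^ 2 * ‖f c‖ ≤ ∫ w in closedBall c R, ‖f w‖ := by
  have hcont : ContinuousOn (circleAverage (‖f ·‖) c) (Icc 0 R) := by
    refine Real.ContinuousOn.circleAverage (hf.continuousOn.norm.mono fun z hz ↦ ?_)
      fun r hr ↦ hr.1
    simpa [dist_eq_norm] using hz.2
  have hconst : π * R ^ 2 * ‖f c‖ = ∫ r in 0..R, (2 * π * r) • ‖f c‖ := by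
    rw [intervalIntegral.integral_smul_const, intervalIntegral.integral_const_mul, integral_id,
      smul_eq_mul]
    ring
  rw [integral_closedBall_eq_integral_circleAverage hR hf.continuousOn.norm, hconst]
  refine intervalIntegral.integral_mono_on hR (Continuous.intervalIntegrable (by fun_prop) _ _)
    (((continuousOn_const.mul continuousOn_id).smul hcont).intervalIntegrable_of_Icc hR) ?_
  intro r ⟨hr₀, hrR⟩
  have hball : DiffContOnCl ℂ f (ball c |r|) :=
    hf.diffContOnCl_ball (closedBall_subset_closedBall (by rwa [abs_of_nonneg hr₀]))
  exact smul_le_smul_of_nonneg_left (norm_le_circleAverage_norm hball)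
    (mul_nonneg (by positivity) hr₀)

theorem MemFock.pi_mul_norm_sq_le {α : ℝ} {F : ℂ → ℂ} (hF : MemFock α F) (hα : 0 ≤ α) (z : ℂ) :
    π * ‖F z‖ ^ 2 ≤
      Real.exp (α * (‖z‖ + 1) ^ 2) * ∫ w, ‖F w‖ ^ 2 * Real.exp (-α * ‖w‖ ^ 2) := by
  obtain ⟨hd, hint⟩ := hF
  set K := Real.exp (α * (‖z‖ + 1) ^ 2)
  have hweight : ∀ w ∈ closedBall z 1, 1 ≤ K * Real.exp (-α * ‖w‖ ^ 2) := by
    intro w hw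
    have hw' : ‖w‖ ^ 2 ≤ (‖z‖ + 1) ^ 2 :=
      pow_le_pow_left₀ (norm_nonneg w) (norm_le_norm_add_const_of_dist_le hw) 2
    rw [← Real.exp_add]
    exact Real.one_le_exp (by nlinarith)
  calc π * ‖F z‖ ^ 2 = π * 1 ^ 2 * ‖F z ^ 2‖ := by rw [norm_pow, one_pow, mul_one]
    _ ≤ ∫ w in closedBall z 1, ‖F w ^ 2‖ :=
      mul_norm_le_integral_closedBall_norm zero_le_one (hd.pow 2).differentiableOn
    _ ≤ ∫ w in closedBall z 1, K * (‖F w‖ ^ 2 * Real.exp (-α * ‖w‖ ^ 2)) := by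
      refine setIntegral_mono_on ?_ (hint.integrableOn.const_mul _) measurableSet_closedBall
        fun w hw ↦ ?_
      · exact (hd.pow 2).continuous.norm.continuousOn.integrableOn_compact
          (isCompact_closedBall z 1)
      · rw [norm_pow]
        nlinarith [hweight w hw, sq_nonneg ‖F w‖]
    _ = K * ∫ w in closedBall z 1, ‖F w‖ ^ 2 * Real.exp (-α * ‖w‖ ^ 2) := integral_const_mul _ _
    _ ≤ K * ∫ w, ‖F w‖ ^ 2 * Real.exp (-α * ‖w‖ ^ 2) :=
      mul_le_mul_of_nonneg_left
        (setIntegral_le_integral hint (Eventually.of_forall fun w ↦ by positivity)) (by positivity)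

theorem MemFock.exists_norm_le_mul_exp {α : ℝ} {F : ℂ → ℂ} (hF : MemFock α F) (hα : 0 ≤ α) :
    ∃ B, ∀ z, ‖F z‖ ≤ B * Real.exp (α * ‖z‖ ^ 2) := by
  set I := ∫ w, ‖F w‖ ^ 2 * Real.exp (-α * ‖w‖ ^ 2)
  have hI : 0 ≤ I / π := div_nonneg (integral_nonneg fun w ↦ by positivity) Real.pi_pos.le
  refine ⟨√(I / π) * Real.exp α, fun z ↦ le_of_pow_le_pow_left₀ two_ne_zero (by positivity) ?_⟩
  calc ‖F z‖ ^ 2 ≤ I / π * Real.exp (α * (‖z‖ + 1) ^ 2) := by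
        rw [div_mul_eq_mul_div, le_div_iff₀ Real.pi_pos]
        linarith [hF.pi_mul_norm_sq_le hα z]
    _ ≤ I / π * (Real.exp α * Real.exp (α * ‖z‖ ^ 2)) ^ 2 := by
        rw [← Real.exp_add, ← Real.exp_nat_mul]
        refine mul_le_mul_of_nonneg_left (Real.exp_le_exp.2 ?_) hI
        push_cast
        nlinarith [mul_nonneg hα (sq_nonneg (‖z‖ - 1))]
    _ = (√(I / π) * Real.exp α * Real.exp (α * ‖z‖ ^ 2)) ^ 2 := by
        rw [mul_assoc, mul_pow √(I / π), Real.sq_sqrt hI]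

theorem norm_le_of_norm_le_on_sector_rays {F : ℂ → ℂ} (hF : Differentiable ℂ F) {B b : ℝ}
    (hgrowth : ∀ z, ‖F z‖ ≤ B * Real.exp (b * ‖z‖ ^ 2)) {a₁ a₂ C : ℝ} (ha : a₁ < a₂)
    (ha' : a₂ - a₁ < π / 2)
    (h₁ : ∀ r : ℝ, 0 < r → ‖F (r * exp (a₁ * I))‖ ≤ C)
    (h₂ : ∀ r : ℝ, 0 < r → ‖F (r * exp (a₂ * I))‖ ≤ C)
    {r ψ : ℝ} (hr : 0 < r) (hψ : ψ ∈ Icc a₁ a₂) :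
    ‖F (r * exp (ψ * I))‖ ≤ C := by
  have hexp (w : ℂ) : exp w = (Real.exp w.re : ℝ) * exp (w.im * I) := by
    conv_lhs => rw [← re_add_im w]
    rw [Complex.exp_add, ofReal_exp]
  have hB : 0 ≤ B :=
    nonneg_of_mul_nonneg_left ((norm_nonneg _).trans (hgrowth 0)) (Real.exp_pos _)
  have hstrip := PhragmenLindelof.horizontal_strip (f := F ∘ exp) (z := Real.log r + ψ * I)
    (hF.comp differentiable_exp).diffContOnCl ⟨2, ?_, |b|, ?_⟩
    (fun w hw ↦ by simpa [hexp w, hw] using h₁ _ (Real.exp_pos w.re))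
    (fun w hw ↦ by simpa [hexp w, hw] using h₂ _ (Real.exp_pos w.re)) (by simpa using hψ.1)
    (by simpa using hψ.2)
  · rwa [Function.comp_apply, Complex.exp_add, ← ofReal_exp, Real.exp_log hr] at hstrip
  · rw [lt_div_iff₀ (by linarith)]
    linarith
  · refine Asymptotics.IsBigO.of_bound B (Eventually.of_forall fun w ↦ ?_)
    have hnorm : ‖exp w‖ ^ 2 = Real.exp (2 * w.re) := by
      rw [norm_exp, ← Real.exp_nat_mul]
      norm_num
    calc ‖(F ∘ exp) w‖ ≤ B * Real.exp (b * Real.exp (2 * w.re)) := hnorm ▸ hgrowth _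
      _ ≤ B * Real.exp (|b| * Real.exp (2 * |w.re|)) := by
        gcongr <;> exact le_abs_self _
      _ = B * ‖Real.exp (|b| * Real.exp (2 * |w.re|))‖ := by
        rw [Real.norm_of_nonneg (Real.exp_pos _).le]

theorem ofReal_mul_exp_add_pi_mul_I (t θ : ℝ) :
    (t : ℂ) * exp (↑(θ + π) * I) = ↑(-t) * exp (θ * I) := by
  push_cast
  rw [add_mul, exp_add_pi_mul_I]
  ring

theorem norm_le_of_norm_le_on_three_lines_of_mem_Icc {F : ℂ → ℂ} (hF : Differentiable ℂ F)
    {B b : ℝ} (hgrowth : ∀ z, ‖F z‖ ≤ B * Real.exp (b * ‖z‖ ^ 2)) {θ₁ θ₂ θ₃ C : ℝ}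
    (h12 : θ₁ < θ₂) (h23 : θ₂ < θ₃) (h31 : θ₃ < θ₁ + π) (a1 : θ₂ - θ₁ < π / 2)
    (a2 : θ₃ - θ₂ < π / 2) (a3 : θ₁ + π - θ₃ < π / 2)
    (h₁ : ∀ t : ℝ, ‖F (t * exp (θ₁ * I))‖ ≤ C) (h₂ : ∀ t : ℝ, ‖F (t * exp (θ₂ * I))‖ ≤ C)
    (h₃ : ∀ t : ℝ, ‖F (t * exp (θ₃ * I))‖ ≤ C) {r ψ : ℝ} (hr : 0 < r)
    (hψ : ψ ∈ Icc θ₁ (θ₁ + π)) :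
    ‖F (r * exp (ψ * I))‖ ≤ C := by
  have h₄ (t : ℝ) : ‖F (t * exp (↑(θ₁ + π) * I))‖ ≤ C := by
    rw [ofReal_mul_exp_add_pi_mul_I]
    exact h₁ _
  rcases le_total ψ θ₂ with hψ₂ | hψ₂
  · exact norm_le_of_norm_le_on_sector_rays hF hgrowth h12 a1 (fun t _ ↦ h₁ t) (fun t _ ↦ h₂ t)
      hr ⟨hψ.1, hψ₂⟩
  rcases le_total ψ θ₃ with hψ₃ | hψ₃
  · exact norm_le_of_norm_le_on_sector_rays hF hgrowth h23 a2 (fun t _ ↦ h₂ t) (fun t _ ↦ h₃ t)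
      hr ⟨hψ₂, hψ₃⟩
  · exact norm_le_of_norm_le_on_sector_rays hF hgrowth h31 a3 (fun t _ ↦ h₃ t) (fun t _ ↦ h₄ t)
      hr ⟨hψ₃, hψ.2⟩

theorem exists_eq_ofReal_mul_exp (z : ℂ) (θ : ℝ) :
    ∃ t : ℝ, ∃ ψ ∈ Ico θ (θ + π), z = t * exp (ψ * I) := by
  set n := toIcoDiv Real.pi_pos θ (arg z)
  refine ⟨‖z‖ * (-1) ^ n, toIcoMod Real.pi_pos θ (arg z), toIcoMod_mem_Ico _ _ _, ?_⟩
  have hrot : exp (n * π * I) = (-1) ^ n := by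
    rw [mul_assoc, Complex.exp_int_mul, exp_pi_mul_I]
  rw [← self_sub_toIcoDiv_zsmul, zsmul_eq_mul]
  push_cast
  rw [sub_mul, Complex.exp_sub, hrot, mul_assoc, mul_div_cancel₀ _ (zpow_ne_zero _ (by norm_num)),
    norm_mul_exp_arg_mul_I]

theorem norm_le_of_norm_le_on_three_lines {F : ℂ → ℂ} (hF : Differentiable ℂ F)
    {B b : ℝ} (hgrowth : ∀ z, ‖F z‖ ≤ B * Real.exp (b * ‖z‖ ^ 2)) {θ₁ θ₂ θ₃ C : ℝ}
    (h12 : θ₁ < θ₂) (h23 : θ₂ < θ₃) (h31 : θ₃ < θ₁ + π) (a1 : θ₂ - θ₁ < π / 2)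
    (a2 : θ₃ - θ₂ < π / 2) (a3 : θ₁ + π - θ₃ < π / 2)
    (h₁ : ∀ t : ℝ, ‖F (t * exp (θ₁ * I))‖ ≤ C) (h₂ : ∀ t : ℝ, ‖F (t * exp (θ₂ * I))‖ ≤ C)
    (h₃ : ∀ t : ℝ, ‖F (t * exp (θ₃ * I))‖ ≤ C) (z : ℂ) :
    ‖F z‖ ≤ C := by
  obtain ⟨t, ψ, hψ, rfl⟩ := exists_eq_ofReal_mul_exp z θ₁
  -- The hypotheses are invariant under `z ↦ -z`, which handles the other half-turn.
  rcases lt_trichotomy t 0 with ht | rfl | ht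
  · have hneg := norm_le_of_norm_le_on_three_lines_of_mem_Icc (F := fun z ↦ F (-z))
      (hF.comp differentiable_neg) (fun z ↦ by simpa using hgrowth (-z)) h12 h23 h31 a1 a2 a3
      (fun t ↦ by simpa using h₁ (-t)) (fun t ↦ by simpa using h₂ (-t))
      (fun t ↦ by simpa using h₃ (-t)) (neg_pos.2 ht) (Ico_subset_Icc_self hψ)
    simpa using hneg
  · simpa using h₁ 0
  · exact norm_le_of_norm_le_on_three_lines_of_mem_Icc hF hgrowth h12 h23 h31 a1 a2 a3 h₁ h₂ h₃ ht
      (Ico_subset_Icc_self hψ)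

/-- Three distinct lines through the origin cutting the plane into six acute sectors
form a Liouville set for `F_α(ℂ)`. -/
theorem three_lines_liouville
    (α : ℝ) (hα : 0 < α) (θ₁ θ₂ θ₃ : ℝ)
    (h0 : 0 ≤ θ₁) (h12 : θ₁ < θ₂) (h23 : θ₂ < θ₃) (h3 : θ₃ < Real.pi)
    (a1 : θ₂ - θ₁ < Real.pi / 2) (a2 : θ₃ - θ₂ < Real.pi / 2)
    (a3 : Real.pi - (θ₃ - θ₁) < Real.pi / 2) :
    IsLiouvilleSet α
      ({z : ℂ | ∃ t : ℝ, z = (t : ℂ) * Complex.exp ((θ₁ : ℂ) * Complex.I)} ∪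
       {z : ℂ | ∃ t : ℝ, z = (t : ℂ) * Complex.exp ((θ₂ : ℂ) * Complex.I)} ∪
       {z : ℂ | ∃ t : ℝ, z = (t : ℂ) * Complex.exp ((θ₃ : ℂ) * Complex.I)}) := by
  rintro F hF ⟨C, hC⟩
  obtain ⟨B, hB⟩ := hF.exists_norm_le_mul_exp hα.le
  have hbound : ∀ z, ‖F z‖ ≤ C :=
    norm_le_of_norm_le_on_three_lines hF.1 hB h12 h23 (by linarith) a1 a2 (by linarith)
      (fun t ↦ hC _ (.inl (.inl ⟨t, rfl⟩))) (fun t ↦ hC _ (.inl (.inr ⟨t, rfl⟩)))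
      (fun t ↦ hC _ (.inr ⟨t, rfl⟩))
  exact hF.1.exists_const_forall_eq_of_bounded
    (isBounded_iff_forall_norm_le.2 ⟨C, forall_mem_range.2 hbound⟩)
end

section
/- Let α > 0 and let Λ ⊆ ℂ be a lattice with s(Λ) = π/α. Then Λ is not a Liouville set for the Fock space F_α(ℂ): there exists a nonconstant function F ∈ F_α(ℂ) that is bounded on Λ. -/
/-!
Write `τ = ω₂ / ω₁` and `v = z / ω₁`. Multiplying `θ(v + (1 + τ) / 2, τ)` by the Gaussian factor
`exp (π v² / (2 Im τ) + π i v)` gives an entire function `G` vanishing on the lattice, and at the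
critical density `α ‖ω₁‖² Im τ = π` the weighted modulus `|G z|² e^{-α|z|²}` is doubly periodic,
hence bounded. So `G` just fails to lie in `F_α`; dividing by `z (z - ω₁)` gains the decay
`|z|⁻⁴`, which is integrable on the plane. The quotient still vanishes on the lattice off `0` and
`ω₁`, and it is not constant since it vanishes at `2 ω₁` while `θ` is not identically zero (its
zeroth Fourier coefficient in `z` is `1`).
-/

open MeasureTheory Complex

/-- The lattice `{m·ω₁ + n·ω₂ : m, n ∈ ℤ}` generated by the periods `ω₁, ω₂`. -/
def latticeSet (ω₁ ω₂ : ℂ) : Set ℂ := {z : ℂ | ∃ m n : ℤ, z = (m : ℂ) * ω₁ + (n : ℂ) * ω₂}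

open Real Filter

theorem Function.Periodic.of_mem_span_int {E β : Type*} [AddCommGroup E] {f : E → β} {s : Set E}
    (hs : ∀ v ∈ s, Function.Periodic f v) {v : E} (hv : v ∈ Submodule.span ℤ s) :
    Function.Periodic f v := by
  induction hv using Submodule.span_induction with
  | mem v hv => exact hs v hv
  | zero => exact fun x => by rw [add_zero]
  | add v w _ _ hv hw => exact hv.add_period hw
  | smul n v _ hv => exact hv.zsmul n

theorem Continuous.bddAbove_range_of_periodic {E ι : Type*} [NormedAddCommGroup E]
    [NormedSpace ℝ E] [Fintype ι] (b : Module.Basis ι ℝ E) {f : E → ℝ} (hf : Continuous f)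
    (hper : ∀ i, Function.Periodic f (b i)) : BddAbove (Set.range f) := by
  have := Module.Basis.finiteDimensional_of_finite b
  have hfract : ∀ x, f (ZSpan.fract b x) = f x := fun x => by
    rw [ZSpan.fract_apply, sub_eq_add_neg]
    exact Function.Periodic.of_mem_span_int (by rintro _ ⟨i, rfl⟩; exact hper i)
      (neg_mem (ZSpan.floor b x).2) x
  refine ((isCompact_closedBall (0 : E) (∑ i, ‖b i‖)).bddAbove_image hf.continuousOn).mono ?_
  rintro _ ⟨x, rfl⟩
  exact ⟨ZSpan.fract b x, by simpa using ZSpan.norm_fract_le b x, hfract x⟩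

lemma Differentiable.dslope {E : Type*} [NormedAddCommGroup E] [NormedSpace ℂ E] [CompleteSpace E]
    {f : ℂ → E} (hf : Differentiable ℂ f) (a : ℂ) : Differentiable ℂ (dslope f a) := by
  simpa only [differentiableOn_univ] using
    (differentiableOn_dslope Filter.univ_mem).2 hf.differentiableOn

lemma dslope_dslope_eq_div {𝕜 : Type*} [NontriviallyNormedField 𝕜] {f : 𝕜 → 𝕜} {a b z : 𝕜}
    (ha : f a = 0) (hb : f b = 0) (hab : b ≠ a) (hza : z ≠ a) (hzb : z ≠ b) :
    dslope (dslope f a) b z = f z / ((z - a) * (z - b)) := by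
  rw [dslope_of_ne _ hzb, slope_def_field, dslope_of_ne _ hza, dslope_of_ne _ hab,
    slope_def_field, slope_def_field, ha, hb]
  field_simp
  simp

lemma integrable_of_norm_mul_sq_le {E : Type*} [NormedAddCommGroup E] {g : ℂ → E}
    (hg : Continuous g) (a : ℂ) {M : ℝ}
    (hM : ∀ z, z ≠ 0 → z ≠ a → ‖g z‖ * (‖z‖ * ‖z - a‖) ^ 2 ≤ M) : Integrable g := by
  have hdecay : Integrable fun z : ℂ => (1 + ‖z‖) ^ (-4 : ℝ) :=
    integrable_one_add_norm (by norm_num [Complex.finrank_real_complex])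
  refine hg.locallyIntegrable.integrable_of_isBigO_cocompact (.of_bound (16 * M) ?_)
    (hdecay.integrableAtFilter _)
  filter_upwards [tendsto_norm_cocompact_atTop.eventually_ge_atTop (2 * ‖a‖ + 1)] with z hz
  have hz0 : z ≠ 0 := by rintro rfl; simp at hz; linarith [norm_nonneg a]
  have hza : z ≠ a := by rintro rfl; linarith [norm_nonneg z]
  have hM0 : 0 ≤ M := (by positivity : 0 ≤ ‖g z‖ * (‖z‖ * ‖z - a‖) ^ 2).trans (hM z hz0 hza)
  have hlow : (1 + ‖z‖) ^ 2 / 4 ≤ ‖z‖ * ‖z - a‖ := by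
    have h₁ : (1 + ‖z‖) / 2 ≤ ‖z‖ := by linarith [norm_nonneg a]
    have h₂ : (1 + ‖z‖) / 2 ≤ ‖z - a‖ := by linarith [norm_sub_norm_le z a]
    calc (1 + ‖z‖) ^ 2 / 4 = (1 + ‖z‖) / 2 * ((1 + ‖z‖) / 2) := by ring
      _ ≤ ‖z‖ * ‖z - a‖ := by gcongr
  rw [Real.norm_of_nonneg (by positivity), Real.rpow_neg (by positivity),
    show ((4 : ℝ)) = ((4 : ℕ) : ℝ) by norm_num, Real.rpow_natCast,
    ← div_eq_mul_inv, le_div_iff₀ (by positivity)]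
  calc ‖g z‖ * (1 + ‖z‖) ^ 4 = 16 * (‖g z‖ * ((1 + ‖z‖) ^ 2 / 4) ^ 2) := by ring
    _ ≤ 16 * (‖g z‖ * (‖z‖ * ‖z - a‖) ^ 2) := by gcongr
    _ ≤ 16 * M := by gcongr; exact hM z hz0 hza

lemma Complex.linearIndependent_one_of_im_ne_zero {τ : ℂ} (hτ : τ.im ≠ 0) :
    LinearIndependent ℝ ![1, τ] := by
  refine LinearIndependent.pair_iff.2 fun s t h => ?_
  have ht : t = 0 := by simpa [hτ] using congrArg im h
  subst ht
  simpa using h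

lemma Complex.im_conj_mul (ω₁ ω₂ : ℂ) : (starRingEnd ℂ ω₁ * ω₂).im = ‖ω₁‖ ^ 2 * (ω₂ / ω₁).im := by
  rcases eq_or_ne ω₁ 0 with rfl | h₁
  · simp
  rw [← im_ofReal_mul, ofReal_pow, ← Complex.conj_mul', mul_assoc, mul_div_cancel₀ _ h₁]

lemma jacobiTheta₂_add_int_mul_left (z τ : ℂ) (n : ℤ) :
    jacobiTheta₂ (z + n * τ) τ = cexp (-π * I * (n ^ 2 * τ + 2 * n * z)) * jacobiTheta₂ z τ := by
  conv_rhs => rw [jacobiTheta₂, ← tsum_mul_left, ← (Equiv.addRight n).tsum_eq]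
  refine tsum_congr fun k => ?_
  simp_rw [jacobiTheta₂_term, ← Complex.exp_add, Equiv.coe_addRight, Int.cast_add]
  ring_nf

lemma jacobiTheta₂_add_int_add_int_mul_left (z τ : ℂ) (m n : ℤ) :
    jacobiTheta₂ (z + m + n * τ) τ =
      cexp (-π * I * (n ^ 2 * τ + 2 * n * z)) * jacobiTheta₂ z τ := by
  have hper : Function.Periodic (jacobiTheta₂ · τ) 1 := (jacobiTheta₂_add_left · τ)
  rw [add_right_comm, ← jacobiTheta₂_add_int_mul_left, ← mul_one (m : ℂ)]
  exact hper.int_mul m _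

lemma jacobiTheta₂_half_period_eq_zero (τ : ℂ) : jacobiTheta₂ ((1 + τ) / 2) τ = 0 := by
  have heven : jacobiTheta₂ ((1 + τ) / 2) τ = jacobiTheta₂ ((1 - τ) / 2) τ := by
    rw [← jacobiTheta₂_neg_left, ← jacobiTheta₂_add_left (-((1 + τ) / 2))]
    ring_nf
  have h := jacobiTheta₂_add_left' ((1 - τ) / 2) τ
  rw [show (1 - τ) / 2 + τ = (1 + τ) / 2 by ring, show τ + 2 * ((1 - τ) / 2) = 1 by ring,
    mul_one, show -(π : ℂ) * I = -(π * I) by ring, Complex.exp_neg, Complex.exp_pi_mul_I,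
    ← heven] at h
  linear_combination h / 2

lemma intervalIntegral_jacobiTheta₂_term (n : ℤ) (τ : ℂ) :
    ∫ x in (0 : ℝ)..1, jacobiTheta₂_term n x τ = if n = 0 then 1 else 0 := by
  split_ifs with hn
  · simp [hn, jacobiTheta₂_term]
  have hc : 2 * π * I * n ≠ 0 := by simp [Real.pi_ne_zero, hn]
  simp_rw [jacobiTheta₂_term, Complex.exp_add, intervalIntegral.integral_mul_const]
  rw [integral_exp_mul_complex hc]
  simp [mul_comm _ (n : ℂ), Complex.exp_int_mul_two_pi_mul_I]

lemma intervalIntegral_jacobiTheta₂ {τ : ℂ} (hτ : 0 < τ.im) :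
    ∫ x in (0 : ℝ)..1, jacobiTheta₂ x τ = 1 := by
  have hnorm (n : ℤ) (x : ℝ) : ‖jacobiTheta₂_term n x τ‖ = ‖jacobiTheta₂_term n 0 τ‖ := by
    simp only [norm_jacobiTheta₂_term, ofReal_im, zero_im]
  have hint (n : ℤ) : Integrable (fun x : ℝ => jacobiTheta₂_term n x τ)
      (volume.restrict (Set.Ioc 0 1)) :=
    (by unfold jacobiTheta₂_term; fun_prop : Continuous _).integrableOn_Ioc
  have hsum : Summable fun n : ℤ =>
      ∫ x in Set.Ioc (0 : ℝ) 1, ‖jacobiTheta₂_term n x τ‖ := by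
    simpa [hnorm] using ((summable_jacobiTheta₂_term_iff 0 τ).mpr hτ).norm
  rw [intervalIntegral.integral_of_le zero_le_one]
  simp_rw [jacobiTheta₂]
  rw [← integral_tsum_of_summable_integral_norm hint hsum]
  simp_rw [← intervalIntegral.integral_of_le zero_le_one, intervalIntegral_jacobiTheta₂_term]
  simp

lemma exists_jacobiTheta₂_ne_zero {τ : ℂ} (hτ : 0 < τ.im) : ∃ z, jacobiTheta₂ z τ ≠ 0 := by
  by_contra! h
  simpa [h] using intervalIntegral_jacobiTheta₂ hτ

noncomputable def thetaWeight (τ u : ℂ) : ℝ :=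
  ‖jacobiTheta₂ u τ‖ * Real.exp (-π * u.im ^ 2 / τ.im)

lemma thetaWeight_add_one (τ u : ℂ) : thetaWeight τ (u + 1) = thetaWeight τ u := by
  simp [thetaWeight, jacobiTheta₂_add_left]

lemma thetaWeight_add_self {τ : ℂ} (hτ : τ.im ≠ 0) (u : ℂ) :
    thetaWeight τ (u + τ) = thetaWeight τ u := by
  rw [thetaWeight, thetaWeight, jacobiTheta₂_add_left', norm_mul, Complex.norm_exp, mul_assoc,
    mul_left_comm, ← Real.exp_add]
  congr 2
  simp only [neg_mul, neg_re, mul_re, ofReal_re, ofReal_im, I_re, I_im, add_im, add_re, mul_im,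
    re_ofNat, im_ofNat]
  field_simp
  ring

lemma continuous_thetaWeight {τ : ℂ} (hτ : 0 < τ.im) : Continuous (thetaWeight τ) := by
  have : Continuous (jacobiTheta₂ · τ) :=
    continuous_iff_continuousAt.2 fun u => (differentiableAt_jacobiTheta₂_fst u hτ).continuousAt
  unfold thetaWeight
  fun_prop

lemma bddAbove_range_thetaWeight {τ : ℂ} (hτ : 0 < τ.im) :
    BddAbove (Set.range (thetaWeight τ)) := by
  let b := basisOfLinearIndependentOfCardEqFinrank
    (Complex.linearIndependent_one_of_im_ne_zero hτ.ne') (by simp)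
  refine (continuous_thetaWeight hτ).bddAbove_range_of_periodic b (Fin.forall_fin_two.2 ⟨?_, ?_⟩)
  · simpa [b] using thetaWeight_add_one τ
  · simpa [b] using thetaWeight_add_self hτ.ne'

/-- The half-period shift moves the zeros of `θ` onto `ℤ + ℤτ`; the Gaussian factor turns the Fock
weight `e^{-π|v|²/(2 Im τ)}` into the doubly periodic weight of `thetaWeight`. -/
noncomputable def fockTheta (τ v : ℂ) : ℂ :=
  cexp (((π / (2 * τ.im) : ℝ) : ℂ) * v ^ 2 + π * I * v) * jacobiTheta₂ (v + (1 + τ) / 2) τ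

lemma differentiable_fockTheta {τ : ℂ} (hτ : 0 < τ.im) : Differentiable ℂ (fockTheta τ) := by
  have : Differentiable ℂ (jacobiTheta₂ · τ) := fun u => differentiableAt_jacobiTheta₂_fst u hτ
  unfold fockTheta
  fun_prop

lemma fockTheta_int_add_int_mul (τ : ℂ) (m n : ℤ) : fockTheta τ (m + n * τ) = 0 := by
  rw [fockTheta, show (m + n * τ) + (1 + τ) / 2 = (1 + τ) / 2 + m + n * τ by ring,
    jacobiTheta₂_add_int_add_int_mul_left, jacobiTheta₂_half_period_eq_zero, mul_zero, mul_zero]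

lemma exists_fockTheta_ne_zero {τ : ℂ} (hτ : 0 < τ.im) : ∃ v, fockTheta τ v ≠ 0 := by
  obtain ⟨u, hu⟩ := exists_jacobiTheta₂_ne_zero hτ
  exact ⟨u - (1 + τ) / 2, mul_ne_zero (Complex.exp_ne_zero _) (by rwa [sub_add_cancel])⟩

lemma norm_fockTheta_mul_exp {τ : ℂ} (hτ : τ.im ≠ 0) (v : ℂ) :
    ‖fockTheta τ v‖ * Real.exp (-π * ‖v‖ ^ 2 / (2 * τ.im)) =
      Real.exp (π * τ.im / 4) * thetaWeight τ (v + (1 + τ) / 2) := by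
  have hexp : (((π / (2 * τ.im) : ℝ) : ℂ) * v ^ 2 + π * I * v).re + -π * ‖v‖ ^ 2 / (2 * τ.im) =
      π * τ.im / 4 + -π * (v + (1 + τ) / 2).im ^ 2 / τ.im := by
    rw [Complex.sq_norm, normSq_apply]
    simp only [add_re, add_im, mul_re, mul_im, ofReal_re, ofReal_im, I_re, I_im, sq,
      div_ofNat_im, one_im]
    field_simp
    ring
  rw [fockTheta, thetaWeight, norm_mul, Complex.norm_exp, mul_right_comm, ← Real.exp_add, hexp,
    Real.exp_add]
  ring

lemma exists_norm_fockTheta_mul_exp_le {τ : ℂ} (hτ : 0 < τ.im) :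
    ∃ M, ∀ v, ‖fockTheta τ v‖ * Real.exp (-π * ‖v‖ ^ 2 / (2 * τ.im)) ≤ M := by
  obtain ⟨M, hM⟩ := bddAbove_range_thetaWeight hτ
  refine ⟨Real.exp (π * τ.im / 4) * M, fun v => ?_⟩
  rw [norm_fockTheta_mul_exp hτ.ne']
  gcongr
  exact hM ⟨_, rfl⟩

lemma exists_sq_norm_fockTheta_div_mul_exp_le {α : ℝ} {ω₁ τ : ℂ} (hτ : 0 < τ.im)
    (h₁ : ω₁ ≠ 0) (hdens : α * ‖ω₁‖ ^ 2 * τ.im = π) :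
    ∃ M, ∀ z, ‖fockTheta τ (z / ω₁)‖ ^ 2 * Real.exp (-α * ‖z‖ ^ 2) ≤ M := by
  obtain ⟨M, hM⟩ := exists_norm_fockTheta_mul_exp_le hτ
  refine ⟨M ^ 2, fun z => ?_⟩
  have hscale : -π * ‖z / ω₁‖ ^ 2 / (2 * τ.im) = -α * ‖z‖ ^ 2 / 2 := by
    rw [← hdens, norm_div]
    field_simp
  have hsq : Real.exp (-α * ‖z‖ ^ 2) = Real.exp (-α * ‖z‖ ^ 2 / 2) ^ 2 := by
    rw [← Real.exp_nat_mul]; ring_nf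
  rw [hsq, ← mul_pow, ← hscale]
  exact pow_le_pow_left₀ (by positivity) (hM _) 2

section Division

variable {G : ℂ → ℂ} {a : ℂ}

lemma memFock_dslope_dslope {α M : ℝ} (hG : Differentiable ℂ G) (h0 : G 0 = 0) (ha : G a = 0)
    (ha0 : a ≠ 0) (hM : ∀ z, ‖G z‖ ^ 2 * Real.exp (-α * ‖z‖ ^ 2) ≤ M) :
    MemFock α (dslope (dslope G 0) a) := by
  have hF := (hG.dslope 0).dslope a
  refine ⟨hF, integrable_of_norm_mul_sq_le (M := M) (by have := hF.continuous; fun_prop) a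
    fun z hz0 hza => ?_⟩
  rw [dslope_dslope_eq_div h0 ha ha0 hz0 hza, Real.norm_of_nonneg (by positivity), norm_div,
    norm_mul, sub_zero]
  have : ‖z - a‖ ≠ 0 := norm_ne_zero_iff.2 (sub_ne_zero.2 hza)
  convert hM z using 1
  field_simp

lemma norm_dslope_dslope_le_of_eq_zero (h0 : G 0 = 0) (ha : G a = 0) (ha0 : a ≠ 0) {z : ℂ}
    (hz : G z = 0) : ‖dslope (dslope G 0) a z‖ ≤ max ‖dslope (dslope G 0) a 0‖
      ‖dslope (dslope G 0) a a‖ := by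
  rcases eq_or_ne z 0 with rfl | hz0
  · exact le_max_left _ _
  rcases eq_or_ne z a with rfl | hza
  · exact le_max_right _ _
  rw [dslope_dslope_eq_div h0 ha ha0 hz0 hza, hz, zero_div, norm_zero]
  positivity

lemma dslope_dslope_not_const (h0 : G 0 = 0) (ha : G a = 0) (ha0 : a ≠ 0) {b w : ℂ}
    (hb : G b = 0) (hb0 : b ≠ 0) (hba : b ≠ a) (hw : G w ≠ 0) :
    ¬∃ c, ∀ z, dslope (dslope G 0) a z = c := by
  rintro ⟨c, hc⟩
  have hw0 : w ≠ 0 := by rintro rfl; exact hw h0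
  have hwa : w ≠ a := by rintro rfl; exact hw ha
  have hFw := dslope_dslope_eq_div h0 ha ha0 hw0 hwa
  rw [hc w, ← hc b, dslope_dslope_eq_div h0 ha ha0 hb0 hba, hb, zero_div] at hFw
  exact div_ne_zero hw (mul_ne_zero (sub_ne_zero.2 hw0) (sub_ne_zero.2 hwa)) hFw.symm

end Division

theorem critical_lattice_not_liouville_general
    (α : ℝ) (hα : 0 < α) (ω₁ ω₂ : ℂ) (h₁ : ω₁ ≠ 0)
    (hor : 0 < (ω₂ / ω₁).im)
    (hs : ((starRingEnd ℂ) ω₁ * ω₂).im = Real.pi / α) :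
    ∃ F : ℂ → ℂ, MemFock α F ∧
      (∃ C : ℝ, ∀ z ∈ latticeSet ω₁ ω₂, ‖F z‖ ≤ C) ∧
      ¬∃ c : ℂ, ∀ z, F z = c := by
  set τ := ω₂ / ω₁
  have hdens : α * ‖ω₁‖ ^ 2 * τ.im = π := by
    rw [Complex.im_conj_mul] at hs
    field_simp at hs
    linarith
  set G : ℂ → ℂ := fun z => fockTheta τ (z / ω₁)
  have hG : Differentiable ℂ G := (differentiable_fockTheta hor).comp (by fun_prop)
  have hG_lattice : ∀ z ∈ latticeSet ω₁ ω₂, G z = 0 := by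
    rintro _ ⟨m, n, rfl⟩
    simpa [G, τ, add_div, mul_div_assoc, h₁] using fockTheta_int_add_int_mul τ m n
  have h0 : G 0 = 0 := hG_lattice 0 ⟨0, 0, by simp⟩
  have hω₁ : G ω₁ = 0 := hG_lattice ω₁ ⟨1, 0, by simp⟩
  have h2ω₁ : G (2 * ω₁) = 0 := hG_lattice _ ⟨2, 0, by simp⟩
  obtain ⟨v, hv⟩ := exists_fockTheta_ne_zero hor
  have hGv : G (v * ω₁) ≠ 0 := by simpa [G, h₁] using hv
  obtain ⟨M, hM⟩ := exists_sq_norm_fockTheta_div_mul_exp_le hor h₁ hdens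
  refine ⟨dslope (dslope G 0) ω₁, memFock_dslope_dslope hG h0 hω₁ h₁ hM,
    ⟨_, fun z hz => norm_dslope_dslope_le_of_eq_zero h0 hω₁ h₁ (hG_lattice z hz)⟩,
    dslope_dslope_not_const h0 hω₁ h₁ h2ω₁ (by simpa using h₁) (by simpa [two_mul] using h₁) hGv⟩

/-- A lattice at the critical density `s(Λ) = π/α` is not a Liouville set for `F_α(ℂ)`:
there is a nonconstant `F ∈ F_α(ℂ)` bounded on the lattice. -/
theorem critical_lattice_not_liouville
    (α : ℝ) (hα : 0 < α) (ω₁ ω₂ : ℂ) (h₁ : ω₁ ≠ 0) (h₂ : ω₂ ≠ 0)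
    (hor : 0 < (ω₂ / ω₁).im)
    (hs : ((starRingEnd ℂ) ω₁ * ω₂).im = Real.pi / α) :
    ∃ F : ℂ → ℂ, MemFock α F ∧
      (∃ C : ℝ, ∀ z ∈ latticeSet ω₁ ω₂, ‖F z‖ ≤ C) ∧
      ¬∃ c : ℂ, ∀ z, F z = c :=
  critical_lattice_not_liouville_general α hα ω₁ ω₂ h₁ hor hs
end

section
/- Let α > 0, let Λ ⊆ ℂ be a uniqueness set for the Fock space F_α(ℂ), and let F, H ∈ F_α(ℂ). If |F(λ)| = |H(λ)| for all λ ∈ Λ and the entire function G := F·H·(F·H' − F'·H) vanishes identically, then there exists τ ∈ ℂ with |τ| = 1 such that F = τ·H. -/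
open MeasureTheory Complex

/-- `Λ` is a uniqueness set for `F_α(ℂ)`: the only function in `F_α(ℂ)` vanishing
identically on `Λ` is the zero function. -/
def IsUniquenessSet (α : ℝ) (Λ : Set ℂ) : Prop :=
  ∀ F : ℂ → ℂ, MemFock α F → (∀ z ∈ Λ, F z = 0) → ∀ z, F z = 0

/-!
Since `F H W(F, H) ≡ 0` for the Wronskian `W(F, H) = F H' - F' H` and entire functions form
an integral domain, `W(F, H) ≡ 0` (trivially so if `F ≡ 0` or `H ≡ 0`). Near a point where
`H ≠ 0` this says `(F / H)' = -W(F, H) / H² = 0`, so `F = c H` locally and hence, by the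
identity theorem, everywhere. Finally `H` does not vanish on all of the uniqueness set `Λ`,
and at a point of `Λ` where it does not, `|F| = |H|` forces `|c| = 1`.
-/

noncomputable def wronskian (f g : ℂ → ℂ) (z : ℂ) : ℂ :=
  f z * deriv g z - deriv f z * g z

section Wronskian

variable {U : Set ℂ} {f g : ℂ → ℂ}

lemma differentiableOn_wronskian (hU : IsOpen U) (hf : DifferentiableOn ℂ f U)
    (hg : DifferentiableOn ℂ g U) : DifferentiableOn ℂ (wronskian f g) U :=
  (hf.mul (hg.deriv hU)).sub ((hf.deriv hU).mul hg)

lemma wronskian_eq_zero_of_eqOn_zero_left (hU : IsOpen U) (hf : ∀ z ∈ U, f z = 0) {z : ℂ}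
    (hz : z ∈ U) : wronskian f g z = 0 := by
  have hf' : deriv f z = 0 := by
    simpa using (show U.EqOn f 0 from hf).deriv hU hz
  simp [wronskian, hf z hz, hf']

lemma wronskian_eq_zero_of_eqOn_zero_right (hU : IsOpen U) (hg : ∀ z ∈ U, g z = 0) {z : ℂ}
    (hz : z ∈ U) : wronskian f g z = 0 := by
  have hg' : deriv g z = 0 := by
    simpa using (show U.EqOn g 0 from hg).deriv hU hz
  simp [wronskian, hg z hz, hg']

lemma wronskian_eqOn_zero_of_mul_wronskian_eqOn_zero (hU : IsOpen U) (hU' : IsPreconnected U)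
    (hf : DifferentiableOn ℂ f U) (hg : DifferentiableOn ℂ g U)
    (h : ∀ z ∈ U, f z * g z * wronskian f g z = 0) : ∀ z ∈ U, wronskian f g z = 0 := by
  have hfa := hf.analyticOnNhd hU
  have hga := hg.analyticOnNhd hU
  rcases (hfa.mul hga).eq_zero_or_eq_zero_of_mul_eq_zero
      ((differentiableOn_wronskian hU hf hg).analyticOnNhd hU) h hU' with hfg | hW
  · rcases hfa.eq_zero_or_eq_zero_of_mul_eq_zero hga hfg hU' with hf0 | hg0
    · exact fun z hz => wronskian_eq_zero_of_eqOn_zero_left hU hf0 hz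
    · exact fun z hz => wronskian_eq_zero_of_eqOn_zero_right hU hg0 hz
  · exact hW

lemma hasDerivAt_div_of_wronskian_eq_zero {z : ℂ} (hf : DifferentiableAt ℂ f z)
    (hg : DifferentiableAt ℂ g z) (hgz : g z ≠ 0) (hW : wronskian f g z = 0) :
    HasDerivAt (fun w => f w / g w) 0 z := by
  have hnum : deriv f z * g z - f z * deriv g z = 0 := by
    rw [← neg_eq_zero, ← hW, wronskian]
    ring
  have hquot := hf.hasDerivAt.div hg.hasDerivAt hgz
  rwa [hnum, zero_div] at hquot

lemma eqOn_const_mul_of_wronskian_eqOn_zero (hU : IsOpen U) (hU' : IsPreconnected U)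
    (hf : DifferentiableOn ℂ f U) (hg : DifferentiableOn ℂ g U)
    (hW : ∀ z ∈ U, wronskian f g z = 0) {z₀ : ℂ} (hz₀ : z₀ ∈ U) (hgz₀ : g z₀ ≠ 0) :
    ∀ z ∈ U, f z = f z₀ / g z₀ * g z := by
  obtain ⟨r, hr, hball⟩ : ∃ r > 0, Metric.ball z₀ r ⊆ U ∩ g ⁻¹' {0}ᶜ :=
    Metric.isOpen_iff.mp (hg.continuousOn.isOpen_inter_preimage hU isOpen_compl_singleton)
      z₀ ⟨hz₀, hgz₀⟩
  have hquot : ∀ z ∈ Metric.ball z₀ r, HasDerivAt (fun w => f w / g w) 0 z := fun z hz =>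
    have hzU := (hball hz).1
    hasDerivAt_div_of_wronskian_eq_zero (hf.differentiableAt (hU.mem_nhds hzU))
      (hg.differentiableAt (hU.mem_nhds hzU)) (hball hz).2 (hW z hzU)
  have hconst : ∀ z ∈ Metric.ball z₀ r, f z / g z = f z₀ / g z₀ := fun z hz =>
    Metric.isOpen_ball.is_const_of_deriv_eq_zero (convex_ball z₀ r).isPreconnected
      (fun w hw => (hquot w hw).differentiableAt.differentiableWithinAt)
      (fun w hw => (hquot w hw).deriv) hz (Metric.mem_ball_self hr)
  have hlocal : f =ᶠ[nhds z₀] fun z => f z₀ / g z₀ * g z := by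
    filter_upwards [Metric.ball_mem_nhds z₀ hr] with z hz
    rw [← hconst z hz, div_mul_cancel₀ _ (hball hz).2]
  exact (hf.analyticOnNhd hU).eqOn_of_preconnected_of_eventuallyEq
    ((differentiableOn_const _).mul hg |>.analyticOnNhd hU) hU' hz₀ hlocal

end Wronskian

namespace IsUniquenessSet

variable {α : ℝ} {Λ : Set ℂ} {F H : ℂ → ℂ}

lemma exists_mem_ne_zero (hΛ : IsUniquenessSet α Λ) (hH : MemFock α H) {z₀ : ℂ}
    (hz₀ : H z₀ ≠ 0) : ∃ w ∈ Λ, H w ≠ 0 := by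
  by_contra! hΛH
  exact hz₀ (hΛ H hH hΛH z₀)

lemma norm_eq_one_of_eq_const_mul (hΛ : IsUniquenessSet α Λ) (hH : MemFock α H) {z₀ : ℂ}
    (hz₀ : H z₀ ≠ 0) {c : ℂ} (hFH : ∀ z, F z = c * H z) (habs : ∀ w ∈ Λ, ‖F w‖ = ‖H w‖) :
    ‖c‖ = 1 := by
  obtain ⟨w, hwΛ, hw⟩ := hΛ.exists_mem_ne_zero hH hz₀
  have h : ‖c‖ * ‖H w‖ = 1 * ‖H w‖ := by
    rw [one_mul, ← norm_mul, ← hFH w, habs w hwΛ]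
  exact mul_right_cancel₀ (norm_ne_zero_iff.mpr hw) h

end IsUniquenessSet

theorem phase_retrieval_criterion_general
    (α : ℝ) (Λ : Set ℂ) (hΛ : IsUniquenessSet α Λ)
    (F H : ℂ → ℂ) (hF : MemFock α F) (hH : MemFock α H)
    (habs : ∀ w ∈ Λ, ‖F w‖ = ‖H w‖)
    (hG : ∀ z : ℂ, F z * H z * (F z * deriv H z - deriv F z * H z) = 0) :
    ∃ τ : ℂ, ‖τ‖ = 1 ∧ ∀ z, F z = τ * H z := by
  have hFd := hF.1.differentiableOn (s := Set.univ)
  have hHd := hH.1.differentiableOn (s := Set.univ)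
  have hW : ∀ z ∈ Set.univ, wronskian F H z = 0 :=
    wronskian_eqOn_zero_of_mul_wronskian_eqOn_zero isOpen_univ isPreconnected_univ hFd hHd
      fun z _ => hG z
  by_cases hH0 : ∀ z, H z = 0
  · have hF0 : ∀ z, F z = 0 := hΛ F hF fun w hw => by simpa [hH0 w] using habs w hw
    exact ⟨1, norm_one, fun z => by rw [hF0 z, hH0 z, mul_zero]⟩
  · obtain ⟨z₀, hz₀⟩ := not_forall.mp hH0
    have hFH : ∀ z, F z = F z₀ / H z₀ * H z := fun z =>
      eqOn_const_mul_of_wronskian_eqOn_zero isOpen_univ isPreconnected_univ hFd hHd hW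
        (Set.mem_univ z₀) hz₀ z (Set.mem_univ z)
    exact ⟨_, hΛ.norm_eq_one_of_eq_const_mul hH hz₀ hFH habs, hFH⟩

/-- **Proposition.** If `Λ` is a uniqueness set for `F_α(ℂ)`, `|F| = |H|` on `Λ`, and
`G = FH(FH' − F'H)` vanishes identically, then `F = τH` for a unimodular `τ`. -/
theorem phase_retrieval_criterion
    (α : ℝ) (hα : 0 < α) (Λ : Set ℂ) (hΛ : IsUniquenessSet α Λ)
    (F H : ℂ → ℂ) (hF : MemFock α F) (hH : MemFock α H)
    (habs : ∀ w ∈ Λ, ‖F w‖ = ‖H w‖)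
    (hG : ∀ z : ℂ, F z * H z * (F z * deriv H z - deriv F z * H z) = 0) :
    ∃ τ : ℂ, ‖τ‖ = 1 ∧ ∀ z, F z = τ * H z :=
  phase_retrieval_criterion_general α Λ hΛ F H hF hH habs hG
end

section
/- Let α > 0, let Λ ⊆ ℂ be a Liouville set for the Fock space F_α(ℂ), and let γ > α/2. If Γ = (γ_λ)_{λ∈Λ} ⊆ ℂ is a sequence indexed by Λ for which there exists κ > 0 with |γ_λ − λ| ≤ κ·e^{-γ|λ|²} for all λ ∈ Λ, then the set {γ_λ : λ ∈ Λ} is a Liouville set for F_α(ℂ). -/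
open MeasureTheory Complex

/-! The sub-mean-value property of `‖F‖²` on unit discs, weighted by the Gaussian, yields the
growth bound `‖F z‖ ≤ M e^{α (‖z‖ + 1)² / 2}` for `F ∈ F_α`, and Cauchy's estimate gives the same
kind of bound for `F'`. By the mean value inequality,
`‖F (γ_λ) - F λ‖ ≲ e^{α (‖λ‖ + κ + 2)² / 2 - γ ‖λ‖²}`, which is bounded since `γ > α / 2`.
Hence a Fock function bounded on `{γ_λ}` is bounded on `Λ`, so it is constant. -/

open Metric Set Real

theorem norm_circleAverage_le {E : Type*} [NormedAddCommGroup E] [NormedSpace ℝ E]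
    (f : ℂ → E) (c : ℂ) (R : ℝ) :
    ‖circleAverage f c R‖ ≤ circleAverage (fun z => ‖f z‖) c R := by
  simp only [circleAverage_def, norm_smul, smul_eq_mul, norm_inv, norm_mul, Real.norm_ofNat,
    Real.norm_of_nonneg pi_pos.le]
  gcongr
  exact intervalIntegral.norm_integral_le_integral_norm (by positivity)

theorem norm_sq_le_circleAverage_norm_sq {f : ℂ → ℂ} (hf : Differentiable ℂ f) (c : ℂ) (R : ℝ) :
    ‖f c‖ ^ 2 ≤ circleAverage (fun z => ‖f z‖ ^ 2) c R := by
  have hmean : circleAverage (fun z => f z ^ 2) c R = f c ^ 2 :=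
    (hf.pow 2).diffContOnCl.circleAverage
  calc ‖f c‖ ^ 2 = ‖circleAverage (fun z => f z ^ 2) c R‖ := by rw [hmean, norm_pow]
    _ ≤ circleAverage (fun z => ‖f z ^ 2‖) c R := norm_circleAverage_le _ c R
    _ = circleAverage (fun z => ‖f z‖ ^ 2) c R := by simp only [norm_pow]

theorem circleMap_eq_add_polarCoord_symm (c : ℂ) (r θ : ℝ) :
    circleMap c r θ = c + Complex.polarCoord.symm (r, θ) := by
  rw [Complex.polarCoord_symm_apply, circleMap, Complex.exp_mul_I]
  push_cast
  ring

theorem setIntegral_ball_eq_integral_indicator_add {E : Type*} [NormedAddCommGroup E]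
    [NormedSpace ℝ E] (f : ℂ → E) (c : ℂ) (R : ℝ) :
    ∫ z in ball c R, f z = ∫ w, (ball 0 R).indicator (fun w => f (c + w)) w := by
  rw [← integral_indicator measurableSet_ball, ← integral_add_left_eq_self _ c]
  congr 1 with w
  have hmem : c + w ∈ ball c R ↔ w ∈ ball 0 R := by
    rw [mem_ball, mem_ball, dist_eq_norm, dist_eq_norm, add_sub_cancel_left, sub_zero]
  by_cases hw : w ∈ ball 0 R
  · rw [indicator_of_mem hw, indicator_of_mem (hmem.2 hw)]
  · rw [indicator_of_notMem hw, indicator_of_notMem (mt hmem.1 hw)]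

theorem setIntegral_ball_eq_setIntegral_polar {E : Type*} [NormedAddCommGroup E]
    [NormedSpace ℝ E] (f : ℂ → E) (c : ℂ) (R : ℝ) :
    ∫ z in ball c R, f z = ∫ p in Ioo 0 R ×ˢ Ioo (-π) π, p.1 • f (circleMap c p.1 p.2) := by
  have htarget : Ioo 0 R ×ˢ Ioo (-π) π ⊆ polarCoord.target := by
    rw [polarCoord_target]
    exact prod_mono Ioo_subset_Ioi_self subset_rfl
  have hindicator : EqOn ((Ioo 0 R ×ˢ Ioo (-π) π).indicator fun p => p.1 • f (circleMap c p.1 p.2))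
      (fun p => p.1 • (ball 0 R).indicator (fun w => f (c + w)) (Complex.polarCoord.symm p))
      polarCoord.target := by
    rintro ⟨r, θ⟩ ⟨hr : 0 < r, hθ⟩
    have hmem : Complex.polarCoord.symm (r, θ) ∈ ball 0 R ↔ r < R := by
      rw [mem_ball_zero_iff, Complex.norm_polarCoord_symm, abs_of_pos hr]
    show _ = r • _
    by_cases hrR : r < R
    · rw [indicator_of_mem (mk_mem_prod (show r ∈ Ioo 0 R from ⟨hr, hrR⟩) hθ),
        indicator_of_mem (hmem.2 hrR), circleMap_eq_add_polarCoord_symm]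
    · rw [indicator_of_notMem (fun h => hrR (mem_prod.1 h).1.2),
        indicator_of_notMem (mt hmem.1 hrR), smul_zero]
  rw [setIntegral_ball_eq_integral_indicator_add, ← Complex.integral_comp_polarCoord_symm,
    ← setIntegral_congr_fun polarCoord.open_target.measurableSet hindicator,
    setIntegral_indicator (measurableSet_Ioo.prod measurableSet_Ioo), inter_eq_right.2 htarget]

theorem setIntegral_ball_eq_intervalIntegral_circleAverage {E : Type*} [NormedAddCommGroup E]
    [NormedSpace ℝ E] [CompleteSpace E] {f : ℂ → E} (hf : Continuous f) (c : ℂ) {R : ℝ}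
    (hR : 0 ≤ R) :
    ∫ z in ball c R, f z = ∫ r in 0..R, (2 * π * r) • circleAverage f c r := by
  have hint : IntegrableOn (fun p : ℝ × ℝ => p.1 • f (circleMap c p.1 p.2))
      (Ioo 0 R ×ˢ Ioo (-π) π) :=
    ((continuous_fst.smul (hf.comp (by fun_prop))).continuousOn.integrableOn_compact
      (isCompact_Icc.prod isCompact_Icc)).mono_set
      (prod_mono Ioo_subset_Icc_self Ioo_subset_Icc_self)
  rw [setIntegral_ball_eq_setIntegral_polar]
  refine (setIntegral_prod _ hint).trans ?_
  rw [intervalIntegral.integral_of_le hR, integral_Ioc_eq_integral_Ioo]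
  refine setIntegral_congr_fun measurableSet_Ioo fun r _ => ?_
  rw [integral_smul, ← integral_Ioc_eq_integral_Ioo,
    ← intervalIntegral.integral_of_le (by linarith [pi_pos]), circleAverage_eq_integral_add (-π),
    intervalIntegral.integral_comp_add_right (fun θ => f (circleMap c r θ)), smul_smul]
  field_simp
  ring_nf

theorem pi_mul_sq_mul_le_setIntegral_ball {f : ℂ → ℝ} (hf : Continuous f) (c : ℂ) {R : ℝ}
    (hR : 0 ≤ R) (hmean : ∀ r ∈ Ioc 0 R, f c ≤ circleAverage f c r) :
    π * R ^ 2 * f c ≤ ∫ z in ball c R, f z := by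
  rw [setIntegral_ball_eq_intervalIntegral_circleAverage hf c hR]
  calc π * R ^ 2 * f c = ∫ r in 0..R, 2 * π * f c * r := by
        rw [intervalIntegral.integral_const_mul, integral_id]
        ring
    _ ≤ ∫ r in 0..R, (2 * π * r) • circleAverage f c r := by
        refine intervalIntegral.integral_mono_on hR
          ((continuous_const_mul _).intervalIntegrable 0 R)
          ((by fun_prop : Continuous fun r => (2 * π * r) • circleAverage f c r)
            |>.intervalIntegrable 0 R) fun r hr => ?_
        rcases hr.1.eq_or_lt with rfl | hr0
        · simp
        · rw [smul_eq_mul, mul_right_comm]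
          gcongr
          exact hmean r ⟨hr0, hr.2⟩

theorem exists_mul_add_sq_sub_mul_sq_le {a γ : ℝ} (h : a < γ) (b : ℝ) :
    ∃ D, ∀ t : ℝ, a * (t + b) ^ 2 - γ * t ^ 2 ≤ D := by
  have hβ : 0 < γ - a := sub_pos.2 h
  refine ⟨a * b ^ 2 + (a * b) ^ 2 / (γ - a), fun t => ?_⟩
  have hsq : ((γ - a) * t - a * b) ^ 2 / (γ - a)
      = (γ - a) * t ^ 2 - 2 * a * b * t + (a * b) ^ 2 / (γ - a) := by
    field_simp
    ring
  linarith [div_nonneg (sq_nonneg ((γ - a) * t - a * b)) hβ.le]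

section GaussianGrowth

variable {E : Type*} [NormedAddCommGroup E] [NormedSpace ℂ E] {F : ℂ → E} {M a : ℝ}

theorem norm_deriv_le_mul_exp_of_norm_le (hF : Differentiable ℂ F) (ha : 0 ≤ a)
    (hM : ∀ z, ‖F z‖ ≤ M * Real.exp (a * (‖z‖ + 1) ^ 2)) (z : ℂ) :
    ‖deriv F z‖ ≤ M * Real.exp (a * (‖z‖ + 2) ^ 2) := by
  have hM0 : 0 ≤ M := nonneg_of_mul_nonneg_left ((norm_nonneg _).trans (hM 0)) (Real.exp_pos _)
  have hsphere : ∀ ζ ∈ sphere z 1, ‖F ζ‖ ≤ M * Real.exp (a * (‖z‖ + 2) ^ 2) := fun ζ hζ => by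
    have hζz : ‖ζ‖ ≤ ‖z‖ + 1 := norm_le_of_mem_closedBall (sphere_subset_closedBall hζ)
    refine (hM ζ).trans ?_
    gcongr M * Real.exp (a * ?_ ^ 2)
    linarith
  simpa using norm_deriv_le_of_forall_mem_sphere_norm_le one_pos hF.diffContOnCl hsphere

theorem norm_sub_le_mul_exp_of_norm_le (hF : Differentiable ℂ F) (ha : 0 ≤ a)
    (hM : ∀ z, ‖F z‖ ≤ M * Real.exp (a * (‖z‖ + 1) ^ 2)) {w v : ℂ} {r : ℝ} (hv : ‖v - w‖ ≤ r) :
    ‖F v - F w‖ ≤ M * Real.exp (a * (‖w‖ + r + 2) ^ 2) * ‖v - w‖ := by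
  have hM0 : 0 ≤ M := nonneg_of_mul_nonneg_left ((norm_nonneg _).trans (hM 0)) (Real.exp_pos _)
  have hderiv : ∀ z ∈ closedBall w r, ‖deriv F z‖ ≤ M * Real.exp (a * (‖w‖ + r + 2) ^ 2) :=
    fun z hz => (norm_deriv_le_mul_exp_of_norm_le hF ha hM z).trans (by
      have := norm_le_of_mem_closedBall hz
      gcongr)
  exact (convex_closedBall w r).norm_image_sub_le_of_norm_deriv_le (fun z _ => hF z) hderiv
    (mem_closedBall_self ((norm_nonneg _).trans hv)) (mem_closedBall_iff_norm.2 hv)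

end GaussianGrowth

namespace MemFock

variable {α : ℝ} {F : ℂ → ℂ}

theorem pi_mul_exp_mul_norm_sq_le (hα : 0 ≤ α) (hF : MemFock α F) (c : ℂ) :
    π * Real.exp (-α * (‖c‖ + 1) ^ 2) * ‖F c‖ ^ 2
      ≤ ∫ z, ‖F z‖ ^ 2 * Real.exp (-α * ‖z‖ ^ 2) := by
  obtain ⟨hdiff, hint⟩ := hF
  set e := Real.exp (-α * (‖c‖ + 1) ^ 2)
  have hcont : Continuous fun z => ‖F z‖ ^ 2 := hdiff.continuous.norm.pow 2
  have hweight : ∀ z ∈ ball c 1, e * ‖F z‖ ^ 2 ≤ ‖F z‖ ^ 2 * Real.exp (-α * ‖z‖ ^ 2) := by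
    intro z hz
    have hzc : ‖z‖ ≤ ‖c‖ + 1 := norm_le_of_mem_closedBall (ball_subset_closedBall hz)
    have hsq : ‖z‖ ^ 2 ≤ (‖c‖ + 1) ^ 2 := pow_le_pow_left₀ (norm_nonneg z) hzc 2
    rw [mul_comm]
    exact mul_le_mul_of_nonneg_left (Real.exp_le_exp.2 (by nlinarith)) (by positivity)
  calc π * e * ‖F c‖ ^ 2 = e * (π * 1 ^ 2 * ‖F c‖ ^ 2) := by ring
    _ ≤ e * ∫ z in ball c 1, ‖F z‖ ^ 2 := by
        gcongr
        exact pi_mul_sq_mul_le_setIntegral_ball hcont c zero_le_one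
          fun r _ => norm_sq_le_circleAverage_norm_sq hdiff c r
    _ = ∫ z in ball c 1, e * ‖F z‖ ^ 2 := (integral_const_mul _ _).symm
    _ ≤ ∫ z in ball c 1, ‖F z‖ ^ 2 * Real.exp (-α * ‖z‖ ^ 2) :=
        setIntegral_mono_on (((continuous_const.mul hcont).continuousOn.integrableOn_compact
          (isCompact_closedBall c 1)).mono_set ball_subset_closedBall) hint.integrableOn
          measurableSet_ball hweight
    _ ≤ ∫ z, ‖F z‖ ^ 2 * Real.exp (-α * ‖z‖ ^ 2) :=
        setIntegral_le_integral hint (ae_of_all _ fun z => by positivity)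

theorem exists_norm_le_mul_exp_s18 (hα : 0 ≤ α) (hF : MemFock α F) :
    ∃ M, ∀ z, ‖F z‖ ≤ M * Real.exp (α / 2 * (‖z‖ + 1) ^ 2) := by
  set I := ∫ z, ‖F z‖ ^ 2 * Real.exp (-α * ‖z‖ ^ 2)
  have hI : 0 ≤ I := integral_nonneg fun z => by positivity
  refine ⟨√(I / π), fun z => ?_⟩
  set s := (‖z‖ + 1) ^ 2
  have hsq : ‖F z‖ ^ 2 ≤ I / π * Real.exp (α * s) := by
    calc ‖F z‖ ^ 2 = π * Real.exp (-α * s) * ‖F z‖ ^ 2 * (Real.exp (α * s) / π) := by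
          rw [neg_mul, Real.exp_neg]
          field_simp
      _ ≤ I * (Real.exp (α * s) / π) := by gcongr; exact hF.pi_mul_exp_mul_norm_sq_le hα z
      _ = I / π * Real.exp (α * s) := by ring
  rw [show α / 2 * s = α * s / 2 by ring, Real.exp_half, ← Real.sqrt_mul (by positivity)]
  exact Real.le_sqrt_of_sq_le hsq

theorem exists_norm_sub_le_of_norm_sub_le_mul_exp {γ κ : ℝ} (hα : 0 ≤ α) (hγ : α / 2 < γ)
    (hF : MemFock α F) (hκ : 0 ≤ κ) :
    ∃ K, ∀ w v : ℂ, ‖v - w‖ ≤ κ * Real.exp (-γ * ‖w‖ ^ 2) → ‖F v - F w‖ ≤ K := by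
  obtain ⟨M, hM⟩ := hF.exists_norm_le_mul_exp_s18 hα
  have hM0 : 0 ≤ M := nonneg_of_mul_nonneg_left ((norm_nonneg _).trans (hM 0)) (Real.exp_pos _)
  obtain ⟨D, hD⟩ := exists_mul_add_sq_sub_mul_sq_le hγ (κ + 2)
  refine ⟨κ * M * Real.exp D, fun w v hv => ?_⟩
  have hvκ : ‖v - w‖ ≤ κ :=
    hv.trans (mul_le_of_le_one_right hκ (Real.exp_le_one_iff.2 (by nlinarith [hα])))
  calc ‖F v - F w‖ ≤ M * Real.exp (α / 2 * (‖w‖ + κ + 2) ^ 2) * ‖v - w‖ :=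
        norm_sub_le_mul_exp_of_norm_le hF.1 (by positivity) hM hvκ
    _ ≤ M * Real.exp (α / 2 * (‖w‖ + κ + 2) ^ 2) * (κ * Real.exp (-γ * ‖w‖ ^ 2)) := by gcongr
    _ = κ * M * Real.exp (α / 2 * (‖w‖ + (κ + 2)) ^ 2 - γ * ‖w‖ ^ 2) := by
        rw [sub_eq_add_neg, Real.exp_add, add_assoc, neg_mul]
        ring
    _ ≤ κ * M * Real.exp D := by gcongr; exact hD _

end MemFock

/-- **Lemma.** The Liouville property is preserved under `e^{-γ|z|²}`-close
perturbations with `γ > α/2`. -/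
theorem liouville_of_close_perturbation
    (α γ : ℝ) (hα : 0 < α) (hγ : α / 2 < γ)
    (Λ : Set ℂ) (hΛ : IsLiouvilleSet α Λ)
    (g : ℂ → ℂ)
    (hclose : ∃ κ : ℝ, 0 < κ ∧ ∀ w ∈ Λ, ‖g w - w‖ ≤ κ * Real.exp (-γ * ‖w‖ ^ 2)) :
    IsLiouvilleSet α (g '' Λ) := by
  obtain ⟨κ, hκ, hclose⟩ := hclose
  intro F hF ⟨C, hC⟩
  obtain ⟨K, hK⟩ := hF.exists_norm_sub_le_of_norm_sub_le_mul_exp hα.le hγ hκ.le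
  refine hΛ F hF ⟨C + K, fun w hw => ?_⟩
  calc ‖F w‖ ≤ ‖F (g w)‖ + ‖F (g w) - F w‖ := norm_le_norm_add_norm_sub _ _
    _ ≤ C + K := add_le_add (hC _ (mem_image_of_mem g hw)) (hK w _ (hclose w hw))
end

section
/- Let Ω ⊆ ℂ be a closed disk of positive radius, and let μ be the uniform probability measure on Ω (normalized Lebesgue measure). Then for every ε > 0, the product measure μ ⊗ μ ⊗ μ of the set {(a,b,c) ∈ ℂ³ : φ(a,b,c) < ε} is at most 4ε. Equivalently, if A, B, C are independent ℂ-valued random variables each uniformly distributed on Ω, then P[φ(A,B,C) < ε] ≤ 4ε. -/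
/-!
If the median angle of `abc` is below `ε`, then so is the angle at `a` or the angle at `b`;
hence `c` lies in the double cone of slope `tan ε` with apex `a` (resp. `b`) and axis the line
`ab`, and so do collinear triples. Rotated onto the real axis, that cone meets the disk in a region
whose vertical sections have length `2 tan ε |x|`, with `x` ranging over an interval of length `2r`
containing `0`: its area is at most `4 r² tan ε`. Conditioning on `a` and `b`, each of the two
events has probability at most `4 tan ε / π ≤ 2ε`, as long as `ε ≤ 1/4`; for larger `ε` there
is nothing to prove.
-/

open MeasureTheory Complex

/-- The median of three real numbers. -/
noncomputable def median3 (x y z : ℝ) : ℝ := max (min x y) (min (max x y) z)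

open Classical in
/-- `φ(a,b,c)`: the median (second-smallest) of the three interior angles of the
triangle with vertices `a`, `b`, `c`, with the convention that it is `0` for
collinear points. -/
noncomputable def medianAngle (a b c : ℂ) : ℝ :=
  if Collinear ℝ ({a, b, c} : Set ℂ) then 0
  else median3 (EuclideanGeometry.angle b a c) (EuclideanGeometry.angle a b c)
    (EuclideanGeometry.angle a c b)

/-- The uniform probability measure on a set `s ⊆ ℂ` (normalized Lebesgue measure). -/
noncomputable def unifOn (s : Set ℂ) : Measure ℂ := (volume s)⁻¹ • volume.restrict s

open Metric
open scoped Real ENNReal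

def doubleCone (t : ℝ) : Set ℂ := {z | |z.im| ≤ t * |z.re|}

lemma isClosed_doubleCone (t : ℝ) : IsClosed (doubleCone t) :=
  isClosed_le (by fun_prop) (by fun_prop)

lemma mem_doubleCone_tan_of_abs_arg_le {z : ℂ} {θ : ℝ} (h : |z.arg| ≤ θ)
    (hθ : θ < π / 2) : z ∈ doubleCone (Real.tan θ) := by
  have hθ0 : 0 ≤ θ := (abs_nonneg _).trans h
  have htan : 0 ≤ Real.tan θ := Real.tan_nonneg_of_nonneg_of_le_pi_div_two hθ0 hθ.le
  have hcos : 0 < Real.cos θ := Real.cos_pos_of_mem_Ioo ⟨by linarith, hθ⟩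
  have hsin_le : |Real.sin z.arg| ≤ Real.sin θ := by
    rw [Real.abs_sin_eq_sin_abs_of_abs_le_pi (Complex.abs_arg_le_pi z)]
    exact Real.sin_le_sin_of_le_of_le_pi_div_two (by linarith [abs_nonneg z.arg]) hθ.le h
  have hcos_le : Real.cos θ ≤ Real.cos z.arg := by
    rw [← Real.cos_abs z.arg]
    exact Real.cos_le_cos_of_nonneg_of_le_pi (abs_nonneg _) (by linarith [Real.pi_pos]) h
  calc |z.im| = ‖z‖ * |Real.sin z.arg| := by
        rw [← Complex.norm_mul_sin_arg, abs_mul, abs_norm]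
    _ ≤ ‖z‖ * Real.sin θ := by gcongr
    _ = Real.tan θ * (‖z‖ * Real.cos θ) := by rw [Real.tan_eq_sin_div_cos]; field_simp
    _ ≤ Real.tan θ * (‖z‖ * Real.cos z.arg) := by gcongr
    _ ≤ Real.tan θ * |z.re| := by rw [Complex.norm_mul_cos_arg]; gcongr; exact le_abs_self _

lemma div_mem_doubleCone_tan_of_angle_le {a b c : ℂ} {θ : ℝ}
    (h : EuclideanGeometry.angle b a c ≤ θ) (hθ : θ < π / 2) :
    (c - a) / (b - a) ∈ doubleCone (Real.tan θ) := by
  rcases eq_or_ne b a with rfl | hb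
  · simp [doubleCone]
  rcases eq_or_ne c a with rfl | hc
  · simp [doubleCone]
  refine mem_doubleCone_tan_of_abs_arg_le ?_ hθ
  rwa [← Complex.angle_eq_abs_arg (sub_ne_zero.2 hc) (sub_ne_zero.2 hb),
    InnerProductGeometry.angle_comm]

lemma im_div_eq_zero_of_collinear {a b c : ℂ} (h : Collinear ℝ ({a, b, c} : Set ℂ)) :
    ((c - a) / (b - a)).im = 0 := by
  obtain ⟨v, hv⟩ := (collinear_iff_of_mem (Set.mem_insert a _)).1 h
  obtain ⟨s, rfl⟩ := hv b (by simp)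
  obtain ⟨s', rfl⟩ := hv c (by simp)
  rcases eq_or_ne v 0 with rfl | hv0
  · simp
  simp only [vadd_eq_add, add_sub_cancel_right, Complex.real_smul]
  rw [mul_div_mul_right _ _ hv0, ← Complex.ofReal_div, Complex.ofReal_im]

lemma min_le_median3 (x y z : ℝ) : min x y ≤ median3 x y z := le_max_left _ _

lemma div_mem_doubleCone_tan_of_medianAngle_lt {a b c : ℂ} {ε : ℝ}
    (h : medianAngle a b c < ε) (hε : ε < π / 2) :
    (c - a) / (b - a) ∈ doubleCone (Real.tan ε) ∨
      (c - b) / (a - b) ∈ doubleCone (Real.tan ε) := by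
  unfold medianAngle at h
  split_ifs at h with hcol
  · left
    show |((c - a) / (b - a)).im| ≤ _
    rw [im_div_eq_zero_of_collinear hcol, abs_zero]
    exact mul_nonneg (Real.tan_nonneg_of_nonneg_of_le_pi_div_two h.le hε.le) (abs_nonneg _)
  · rcases min_lt_iff.1 ((min_le_median3 _ _ _).trans_lt h) with h' | h'
    · exact .inl (div_mem_doubleCone_tan_of_angle_le h'.le hε)
    · exact .inr (div_mem_doubleCone_tan_of_angle_le h'.le hε)

lemma Real.tan_le_three_halves_mul {x : ℝ} (h0 : 0 ≤ x) (h1 : x ≤ 1 / 2) :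
    Real.tan x ≤ 3 / 2 * x := by
  have hcos : 7 / 8 ≤ Real.cos x := by nlinarith [Real.one_sub_sq_div_two_le_cos (x := x)]
  rw [Real.tan_eq_sin_div_cos, div_le_iff₀ (by linarith)]
  nlinarith [Real.sin_le h0]

lemma volume_setOf_fst_mem_abs_snd_le {s : Set ℝ} (hs : MeasurableSet s) {g : ℝ → ℝ}
    (hg : Measurable g) :
    volume {p : ℝ × ℝ | p.1 ∈ s ∧ |p.2| ≤ g p.1} =
      ∫⁻ x in s, ENNReal.ofReal (2 * g x) := by
  set S := {p : ℝ × ℝ | p.1 ∈ s ∧ |p.2| ≤ g p.1}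
  have hmeas : MeasurableSet S :=
    (measurable_fst hs).inter (measurableSet_le measurable_snd.abs (hg.comp measurable_fst))
  rw [Measure.volume_eq_prod, Measure.prod_apply hmeas, ← lintegral_indicator hs]
  refine lintegral_congr fun x => ?_
  by_cases hx : x ∈ s
  · have : Prod.mk x ⁻¹' S = Set.Icc (-g x) (g x) := by
      ext y; simp [S, hx, abs_le]
    rw [this, Real.volume_Icc, Set.indicator_of_mem hx]
    ring_nf
  · have : Prod.mk x ⁻¹' S = ∅ := by
      ext y; simp [S, hx]
    rw [this, measure_empty, Set.indicator_of_notMem hx]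

lemma integral_abs (a b : ℝ) : ∫ x in a..b, |x| = (b * |b| - a * |a|) / 2 := by
  have from_zero (c : ℝ) : ∫ x in (0 : ℝ)..c, |x| = c * |c| / 2 := by
    rcases le_total 0 c with hc | hc
    · have h : Set.EqOn (fun x : ℝ => |x|) (fun x => x) (Set.uIcc 0 c) := fun x hx =>
        abs_of_nonneg (Set.uIcc_of_le hc ▸ hx).1
      rw [intervalIntegral.integral_congr h, integral_id, abs_of_nonneg hc]
      ring
    · have h : Set.EqOn (fun x : ℝ => |x|) (fun x => -x) (Set.uIcc 0 c) := fun x hx =>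
        abs_of_nonpos (Set.uIcc_of_ge hc ▸ hx).2
      rw [intervalIntegral.integral_congr h, intervalIntegral.integral_neg, integral_id,
        abs_of_nonpos hc]
      ring
  rw [← intervalIntegral.integral_interval_sub_left (μ := volume) (a := 0)
    (continuous_abs.intervalIntegrable _ _) (continuous_abs.intervalIntegrable _ _),
    from_zero, from_zero]
  ring

lemma volume_doubleCone_inter_closedBall_le {z₀ : ℂ} {r t : ℝ} (hz₀ : |z₀.re| ≤ r)
    (ht : 0 ≤ t) :
    volume (doubleCone t ∩ closedBall z₀ r) ≤ ENNReal.ofReal (4 * t * r ^ 2) := by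
  set m := z₀.re
  have hm := abs_le.1 hz₀
  have hsub : doubleCone t ∩ closedBall z₀ r ⊆ measurableEquivRealProd ⁻¹'
      {p : ℝ × ℝ | p.1 ∈ Set.Icc (m - r) (m + r) ∧ |p.2| ≤ t * |p.1|} := by
    rintro z ⟨hz, hzr⟩
    have : |z.re - m| ≤ r := by
      simpa using (Complex.abs_re_le_norm (z - z₀)).trans (mem_closedBall_iff_norm.1 hzr)
    show z.re ∈ Set.Icc (m - r) (m + r) ∧ |z.im| ≤ t * |z.re|
    exact ⟨⟨by linarith [(abs_le.1 this).1], by linarith [(abs_le.1 this).2]⟩, hz⟩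
  have hint : IntegrableOn (fun x : ℝ => 2 * (t * |x|)) (Set.Icc (m - r) (m + r)) :=
    (by fun_prop : Continuous fun x : ℝ => 2 * (t * |x|)).integrableOn_Icc
  calc volume (doubleCone t ∩ closedBall z₀ r)
      ≤ volume {p : ℝ × ℝ | p.1 ∈ Set.Icc (m - r) (m + r) ∧ |p.2| ≤ t * |p.1|} :=
        (measure_mono hsub).trans_eq
          (Complex.volume_preserving_equiv_real_prod.measure_preimage_equiv _)
    _ = ∫⁻ x in Set.Icc (m - r) (m + r), ENNReal.ofReal (2 * (t * |x|)) :=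
        volume_setOf_fst_mem_abs_snd_le measurableSet_Icc
          (by fun_prop : Continuous fun x : ℝ => t * |x|).measurable
    _ = ENNReal.ofReal (t * ((m + r) ^ 2 + (m - r) ^ 2)) := by
        rw [← ofReal_integral_eq_lintegral_ofReal hint (.of_forall fun x => by positivity),
          integral_Icc_eq_integral_Ioc, ← intervalIntegral.integral_of_le (by linarith),
          intervalIntegral.integral_const_mul, intervalIntegral.integral_const_mul, integral_abs,
          abs_of_nonneg (by linarith : 0 ≤ m + r), abs_of_nonpos (by linarith : m - r ≤ 0)]
        ring_nf
    _ ≤ ENNReal.ofReal (4 * t * r ^ 2) :=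
        ENNReal.ofReal_le_ofReal <| by
          nlinarith [mul_le_mul_of_nonneg_left (sq_le_sq' hm.1 hm.2) ht]

lemma div_ofReal_mem_doubleCone_iff {z : ℂ} {ρ t : ℝ} (hρ : 0 < ρ) :
    z / ρ ∈ doubleCone t ↔ z ∈ doubleCone t := by
  show |(z / ρ).im| ≤ t * |(z / ρ).re| ↔ |z.im| ≤ t * |z.re|
  rw [Complex.div_ofReal_im, Complex.div_ofReal_re, abs_div, abs_div, abs_of_pos hρ,
    ← mul_div_assoc, div_le_div_iff_of_pos_right hρ]

lemma volume_div_preimage_doubleCone_inter_closedBall_le {a b c₀ : ℂ} {r t : ℝ}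
    (ha : a ∈ closedBall c₀ r) (hab : a ≠ b) (ht : 0 ≤ t) :
    volume ((fun c => (c - a) / (b - a)) ⁻¹' doubleCone t ∩ closedBall c₀ r)
      ≤ ENNReal.ofReal (4 * t * r ^ 2) := by
  have hba : b - a ≠ 0 := sub_ne_zero.2 hab.symm
  have hnorm : (‖b - a‖ : ℂ) ≠ 0 := by simpa using hba
  let U : Circle := ⟨‖b - a‖ / (b - a), by simp [Submonoid.unitSphere, hba]⟩
  set ψ : ℂ → ℂ := fun c => rotation U (c - a)
  have hψ : MeasurePreserving ψ volume volume :=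
    (rotation U).measurePreserving.comp (measurePreserving_sub_right volume a)
  have hψ_dist (c c' : ℂ) : dist (ψ c) (ψ c') = dist c c' := by
    simp [ψ, dist_eq_norm, ← mul_sub, Circle.norm_coe]
  have hset : (fun c => (c - a) / (b - a)) ⁻¹' doubleCone t ∩ closedBall c₀ r
      = ψ ⁻¹' (doubleCone t ∩ closedBall (ψ c₀) r) := by
    ext c
    have : (c - a) / (b - a) = ψ c / ‖b - a‖ := by
      rw [show ψ c = ‖b - a‖ / (b - a) * (c - a) from rotation_apply U (c - a)]
      field_simp
    simp only [Set.mem_inter_iff, Set.mem_preimage, this,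
      div_ofReal_mem_doubleCone_iff (norm_pos_iff.2 hba), mem_closedBall, hψ_dist]
  rw [hset, hψ.measure_preimage
    ((isClosed_doubleCone t).inter isClosed_closedBall).measurableSet.nullMeasurableSet]
  refine volume_doubleCone_inter_closedBall_le ?_ ht
  calc |(ψ c₀).re| ≤ ‖ψ c₀ - ψ a‖ := by
        simpa [ψ] using Complex.abs_re_le_norm (ψ c₀)
    _ ≤ r := by rw [← dist_eq_norm, hψ_dist, dist_comm]; exact ha

lemma isProbabilityMeasure_unifOn {s : Set ℂ} (h₀ : volume s ≠ 0) (h_top : volume s ≠ ∞) :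
    IsProbabilityMeasure (unifOn s) :=
  ProbabilityTheory.cond_isProbabilityMeasure_of_finite h₀ h_top

lemma unifOn_closedBall_le_of_volume_inter_le {c₀ : ℂ} {r k : ℝ} (hr : 0 < r) {s : Set ℂ}
    (h : volume (s ∩ closedBall c₀ r) ≤ ENNReal.ofReal (k * r ^ 2)) :
    unifOn (closedBall c₀ r) s ≤ ENNReal.ofReal (k / π) := by
  have hvol : volume (closedBall c₀ r) = ENNReal.ofReal (π * r ^ 2) := by
    rw [Complex.volume_closedBall, ← ENNReal.ofReal_pow hr.le, mul_comm,
      ← ENNReal.ofReal_coe_nnreal, NNReal.coe_real_pi, ← ENNReal.ofReal_mul Real.pi_pos.le]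
  have hpos : 0 < π * r ^ 2 := by positivity
  rw [unifOn, ← ProbabilityTheory.cond, ProbabilityTheory.cond_apply measurableSet_closedBall,
    ENNReal.inv_mul_le_iff, Set.inter_comm, hvol, ← ENNReal.ofReal_mul hpos.le]
  · convert h using 2; field_simp
  · simpa [hvol] using hpos
  · simp [hvol]

lemma unifOn_closedBall_div_preimage_doubleCone_tan_le {a b c₀ : ℂ} {r ε : ℝ} (hr : 0 < r)
    (ha : a ∈ closedBall c₀ r) (hab : a ≠ b) (hε₀ : 0 ≤ ε) (hε : ε ≤ 1 / 2) :
    unifOn (closedBall c₀ r) ((fun c => (c - a) / (b - a)) ⁻¹' doubleCone (Real.tan ε))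
      ≤ ENNReal.ofReal (2 * ε) := by
  have htan := Real.tan_le_three_halves_mul hε₀ hε
  have htan₀ : 0 ≤ Real.tan ε :=
    Real.tan_nonneg_of_nonneg_of_le_pi_div_two hε₀ (by linarith [Real.pi_gt_three])
  refine (unifOn_closedBall_le_of_volume_inter_le hr
    (volume_div_preimage_doubleCone_inter_closedBall_le ha hab htan₀)).trans
    (ENNReal.ofReal_le_ofReal ?_)
  rw [div_le_iff₀ Real.pi_pos]
  nlinarith [Real.pi_gt_three]

lemma prod_apply_le_of_ae_le {α β : Type*} [MeasurableSpace α] [MeasurableSpace β]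
    {μ : Measure α} {ν : Measure β} [IsProbabilityMeasure μ] [SFinite ν] {s : Set (α × β)}
    (hs : MeasurableSet s) {B : ℝ≥0∞} (h : ∀ᵐ a ∂μ, ν (Prod.mk a ⁻¹' s) ≤ B) :
    μ.prod ν s ≤ B := by
  rw [Measure.prod_apply hs]
  calc ∫⁻ a, ν (Prod.mk a ⁻¹' s) ∂μ ≤ ∫⁻ _, B ∂μ := lintegral_mono_ae h
    _ = B := by simp

lemma prod_prod_apply_le_of_ae_ae_le {α β γ : Type*} [MeasurableSpace α] [MeasurableSpace β]
    [MeasurableSpace γ] {μ : Measure α} {ν : Measure β} {ρ : Measure γ}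
    [IsProbabilityMeasure μ] [IsProbabilityMeasure ν] [SFinite ρ] {s : Set (α × β × γ)}
    (hs : MeasurableSet s) {B : ℝ≥0∞} (h : ∀ᵐ a ∂μ, ∀ᵐ b ∂ν, ρ {c | (a, b, c) ∈ s} ≤ B) :
    μ.prod (ν.prod ρ) s ≤ B :=
  prod_apply_le_of_ae_le hs <| h.mono fun _ ha =>
    prod_apply_le_of_ae_le (hs.preimage measurable_prodMk_left) ha

lemma unifOn_prod_prod_le_of_forall_le {s : Set ℂ} (hs : MeasurableSet s)
    [IsProbabilityMeasure (unifOn s)] {S : Set (ℂ × ℂ × ℂ)} (hS : MeasurableSet S)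
    {B : ℝ≥0∞} (h : ∀ a ∈ s, ∀ b ∈ s, a ≠ b → unifOn s {c | (a, b, c) ∈ S} ≤ B) :
    (unifOn s).prod ((unifOn s).prod (unifOn s)) S ≤ B := by
  refine prod_prod_apply_le_of_ae_ae_le hS <|
    (ProbabilityTheory.ae_cond_mem hs).mono fun a ha => ?_
  filter_upwards [ProbabilityTheory.ae_cond_mem hs,
    ProbabilityTheory.cond_absolutelyContinuous.ae_le (volume.ae_ne a)] with b hb hba
  exact h a ha b hb hba.symm

/-- **Lemma.** Three independent uniform points in a disk have median triangle angle
at least `ε` except on an event of probability at most `4ε`. -/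
theorem prob_small_median_angle_le
    (c₀ : ℂ) (r : ℝ) (hr : 0 < r) (ε : ℝ) (hε : 0 < ε) :
    ((unifOn (Metric.closedBall c₀ r)).prod
        ((unifOn (Metric.closedBall c₀ r)).prod (unifOn (Metric.closedBall c₀ r))))
      {p : ℂ × ℂ × ℂ | medianAngle p.1 p.2.1 p.2.2 < ε} ≤ ENNReal.ofReal (4 * ε) := by
  set D := closedBall c₀ r
  have : IsProbabilityMeasure (unifOn D) :=
    isProbabilityMeasure_unifOn (measure_closedBall_pos volume c₀ hr).ne'
      measure_closedBall_lt_top.ne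
  rcases lt_or_ge (1 / 4) ε with hε4 | hε4
  · exact prob_le_one.trans (ENNReal.one_le_ofReal.2 (by linarith))
  have hslice {a b : ℂ} (ha : a ∈ D) (hab : a ≠ b) :=
    unifOn_closedBall_div_preimage_doubleCone_tan_le hr ha hab hε.le (by linarith)
  have hmeas (f : ℂ × ℂ × ℂ → ℂ) (hf : Measurable f) :
      MeasurableSet {p | f p ∈ doubleCone (Real.tan ε)} :=
    (isClosed_doubleCone _).measurableSet.preimage hf
  calc _ ≤ (unifOn D).prod ((unifOn D).prod (unifOn D))
        ({p | (p.2.2 - p.1) / (p.2.1 - p.1) ∈ doubleCone (Real.tan ε)} ∪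
          {p | (p.2.2 - p.2.1) / (p.1 - p.2.1) ∈ doubleCone (Real.tan ε)}) :=
        measure_mono fun p hp =>
          div_mem_doubleCone_tan_of_medianAngle_lt hp (by linarith [Real.pi_gt_three])
    _ ≤ ENNReal.ofReal (2 * ε) + ENNReal.ofReal (2 * ε) :=
      (measure_union_le _ _).trans <| add_le_add
        (unifOn_prod_prod_le_of_forall_le measurableSet_closedBall (hmeas _ (by fun_prop))
          fun a ha _ _ hab => hslice ha hab)
        (unifOn_prod_prod_le_of_forall_le measurableSet_closedBall (hmeas _ (by fun_prop))
          fun _ _ b hb hab => hslice hb hab.symm)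
    _ = ENNReal.ofReal (4 * ε) := by
        rw [← ENNReal.ofReal_add (by linarith) (by linarith)]; ring_nf
end
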